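/- arXiv:2511.04465 — 10 statements merged into one kernel-verified Lean document; each statement's English description precedes it below -/
import Mathlib

section
/- A payment rule φ is fraud-proof if and only if it is single-user fraud-proof. -/
open Finset

/-- An instance `I = (N, C, w)`: a finite nonempty set of users `N`, a finite set of
artists `C`, and nonnegative real engagement weights `w i j` (supported on
`users × artists`), such that every user has positive total engagement. -/
structure Inst where
  users : Finset ℕ
  artists : Finset ℕ
  w : ℕ → ℕ → ℝ
  users_nonempty : users.Nonempty
  w_nonneg : ∀ i j, 0 ≤ w i j
  w_supp : ∀ i j, w i j ≠ 0 → i ∈ users ∧ j ∈ artists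
  w_pos : ∀ i ∈ users, 0 < ∑ j ∈ artists, w i j

/-- `φ` is a payment rule (with revenue share `α`) on the class of instances satisfying `P`:
payments to artists are nonnegative and total `α·|N|`. -/
def IsRuleOn (P : Inst → Prop) (α : ℝ) (φ : Inst → ℕ → ℝ) : Prop :=
  ∀ I : Inst, P I →
    (∀ j ∈ I.artists, 0 ≤ φ I j) ∧ (∑ j ∈ I.artists, φ I j) = α * I.users.card

/-- `φ` is a payment rule (with revenue share `α`). -/
abbrev IsRule (α : ℝ) (φ : Inst → ℕ → ℝ) : Prop := IsRuleOn (fun _ => True) α φ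

/-- Fraud-proofness, relative to a class `P` of instances: for instances
`I = (N \ N̂, C, w)` and `I' = (N, C, w')` agreeing on the genuine users `N \ N̂`,
and any coalition `Ĉ ⊆ C`, the gain `φ_{I'}(Ĉ) − φ_I(Ĉ)` is at most `|N̂|`. -/
def FraudProofOn (P : Inst → Prop) (φ : Inst → ℕ → ℝ) : Prop :=
  ∀ I I' : Inst, P I → P I' →
    ∀ Nhat : Finset ℕ, Nhat ⊆ I'.users → I.users = I'.users \ Nhat →
      I.artists = I'.artists →
      (∀ i ∈ I.users, ∀ j ∈ I.artists, I.w i j = I'.w i j) →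
      ∀ Chat ⊆ I.artists,
        (∑ j ∈ Chat, φ I' j) - (∑ j ∈ Chat, φ I j) ≤ (Nhat.card : ℝ)

/-- Fraud-proofness. -/
abbrev FraudProof (φ : Inst → ℕ → ℝ) : Prop := FraudProofOn (fun _ => True) φ

/-- Single-user fraud-proofness: fraud-proofness restricted to `|N̂| = 1`. -/
def SingleFraudProof (φ : Inst → ℕ → ℝ) : Prop :=
  ∀ I I' : Inst,
    ∀ Nhat : Finset ℕ, Nhat.card = 1 → Nhat ⊆ I'.users → I.users = I'.users \ Nhat →
      I.artists = I'.artists →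
      (∀ i ∈ I.users, ∀ j ∈ I.artists, I.w i j = I'.w i j) →
      ∀ Chat ⊆ I.artists,
        (∑ j ∈ Chat, φ I' j) - (∑ j ∈ Chat, φ I j) ≤ 1

open Classical in
/-- The number of users whose engagement vectors differ between two instances
(on the same user and artist sets). -/
noncomputable def bribedCount (I I' : Inst) : ℕ :=
  (I.users.filter (fun i => ∃ j ∈ I.artists, I.w i j ≠ I'.w i j)).card

/-- Bribery-proofness, relative to a class `P` of instances: for instances `I, I'` on the
same users and artists whose engagement vectors differ for exactly `k` users, and any
coalition `Ĉ ⊆ C`, the gain `φ_{I'}(Ĉ) − φ_I(Ĉ)` is at most `k`. -/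
def BriberyProofOn (P : Inst → Prop) (φ : Inst → ℕ → ℝ) : Prop :=
  ∀ I I' : Inst, P I → P I' →
    I.users = I'.users → I.artists = I'.artists →
    ∀ Chat ⊆ I.artists,
      (∑ j ∈ Chat, φ I' j) - (∑ j ∈ Chat, φ I j) ≤ (bribedCount I I' : ℝ)

/-- Bribery-proofness. -/
abbrev BriberyProof (φ : Inst → ℕ → ℝ) : Prop := BriberyProofOn (fun _ => True) φ

/-- Single-user bribery-proofness: bribery-proofness restricted to `k = 1`. -/
def SingleBriberyProof (φ : Inst → ℕ → ℝ) : Prop :=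
  ∀ I I' : Inst,
    I.users = I'.users → I.artists = I'.artists →
    bribedCount I I' = 1 →
    ∀ Chat ⊆ I.artists,
      (∑ j ∈ Chat, φ I' j) - (∑ j ∈ Chat, φ I j) ≤ 1

/-- Anonymity (relative to a class `P`): permuting the labels of the users does not
affect the payoffs of the artists. -/
def AnonymousOn (P : Inst → Prop) (φ : Inst → ℕ → ℝ) : Prop :=
  ∀ I I' : Inst, P I → P I' →
    I.users = I'.users → I.artists = I'.artists →
    ∀ σ : Equiv.Perm ℕ, (∀ i ∈ I.users, σ i ∈ I.users) →
      (∀ i ∈ I.users, ∀ j ∈ I.artists, I.w i j = I'.w (σ i) j) →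
      ∀ j ∈ I.artists, φ I j = φ I' j

/-- Neutrality (relative to a class `P`): permuting the labels of the artists permutes
their payoffs. -/
def NeutralOn (P : Inst → Prop) (φ : Inst → ℕ → ℝ) : Prop :=
  ∀ I I' : Inst, P I → P I' →
    I.users = I'.users → I.artists = I'.artists →
    ∀ σ : Equiv.Perm ℕ, (∀ j ∈ I.artists, σ j ∈ I.artists) →
      (∀ i ∈ I.users, ∀ j ∈ I.artists, I.w i j = I'.w i (σ j)) →
      ∀ j ∈ I.artists, φ I j = φ I' (σ j)

/-- Neutrality. -/
abbrev Neutral (φ : Inst → ℕ → ℝ) : Prop := NeutralOn (fun _ => True) φ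

/-- No free-ridership (relative to a class `P`): an artist with zero total engagement
receives zero payment. -/
def NoFreeRideOn (P : Inst → Prop) (φ : Inst → ℕ → ℝ) : Prop :=
  ∀ I : Inst, P I → ∀ j ∈ I.artists, (∑ i ∈ I.users, I.w i j) = 0 → φ I j = 0

/-- Sybil-proofness: artists outside `C*` cannot change their combined payoff by
splitting/merging (user-by-user engagement towards `C*` and user totals outside `C*`
are preserved). -/
def SybilProof (φ : Inst → ℕ → ℝ) : Prop :=
  ∀ I I' : Inst, I.users = I'.users → I.artists ⊆ I'.artists →
    ∀ Cstar ⊆ I.artists,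
      (∀ i ∈ I.users, ∀ j ∈ Cstar, I.w i j = I'.w i j) →
      (∀ i ∈ I.users, ∑ j ∈ I.artists \ Cstar, I.w i j = ∑ j ∈ I'.artists \ Cstar, I'.w i j) →
      ∑ j ∈ I.artists \ Cstar, φ I j = ∑ j ∈ I'.artists \ Cstar, φ I' j

/-- Strong Sybil-proofness: as Sybil-proofness, but only total engagements
(aggregated over users) are preserved. -/
def StrongSybilProof (φ : Inst → ℕ → ℝ) : Prop :=
  ∀ I I' : Inst, I.users = I'.users → I.artists ⊆ I'.artists →
    ∀ Cstar ⊆ I.artists,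
      (∀ j ∈ Cstar, ∑ i ∈ I.users, I.w i j = ∑ i ∈ I'.users, I'.w i j) →
      (∑ i ∈ I.users, ∑ j ∈ I.artists \ Cstar, I.w i j
        = ∑ i ∈ I'.users, ∑ j ∈ I'.artists \ Cstar, I'.w i j) →
      ∑ j ∈ I.artists \ Cstar, φ I j = ∑ j ∈ I'.artists \ Cstar, φ I' j

/-- Engagement monotonicity: if artist `j*`'s engagement weakly increases while every
other artist's engagement weakly decreases, then `j*`'s payoff does not decrease. -/
def EngagementMonotone (φ : Inst → ℕ → ℝ) : Prop :=
  ∀ I I' : Inst, I.users = I'.users → I.artists = I'.artists →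
    ∀ jstar ∈ I.artists,
      (∀ i ∈ I.users, I.w i jstar ≤ I'.w i jstar) →
      (∀ i ∈ I.users, ∀ j ∈ I.artists, j ≠ jstar → I'.w i j ≤ I.w i j) →
      φ I jstar ≤ φ I' jstar

/-- Pigou-Dalton consistency: transferring `δ > 0` of engagement with artist `j` from a
user `i` with more engagement to a user `i'` with less (keeping everything else fixed,
and not overshooting) does not decrease `j`'s payoff. -/
def PigouDalton (φ : Inst → ℕ → ℝ) : Prop :=
  ∀ I I' : Inst, I.users = I'.users → I.artists = I'.artists →
    ∀ i ∈ I.users, ∀ i' ∈ I.users, i ≠ i' →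
      ∀ j ∈ I.artists, ∀ δ : ℝ,
        0 < δ → 0 < I.w i j - δ →
        I'.w i j = I.w i j - δ →
        I'.w i' j = I.w i' j + δ →
        I'.w i' j ≤ I'.w i j →
        (∀ k ∈ I.users, ∀ j' ∈ I.artists, j' ≠ j → I.w k j' = I'.w k j') →
        (∀ k ∈ I.users, k ≠ i → k ≠ i' → I.w k j = I'.w k j) →
        φ I j ≤ φ I' j

/-- User-addition monotonicity: adding one new user (with an arbitrary engagement
vector) does not decrease any artist's payoff. -/
def UserAdditionMonotone (φ : Inst → ℕ → ℝ) : Prop :=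
  ∀ I I' : Inst, I.artists = I'.artists →
    ∀ i₀ : ℕ, i₀ ∉ I.users → I'.users = insert i₀ I.users →
      (∀ i ∈ I.users, ∀ j ∈ I.artists, I.w i j = I'.w i j) →
      ∀ j ∈ I.artists, φ I j ≤ φ I' j

/-- The single-user instance `I_i = ({i}, C, w_i)` extracted from an instance `I`. -/
def Inst.single (I : Inst) (i : ℕ) (hi : i ∈ I.users) : Inst where
  users := {i}
  artists := I.artists
  w := fun i' j => if i' = i then I.w i j else 0
  users_nonempty := Finset.singleton_nonempty i
  w_nonneg := by
    intro i' j
    try dsimp only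
    split
    · exact I.w_nonneg i j
    · exact le_refl 0
  w_supp := by
    intro i' j h
    try dsimp only at h
    split at h
    · rename_i hii
      exact ⟨by simp [hii], (I.w_supp i j h).2⟩
    · exact absurd rfl h
  w_pos := by
    intro i' hi'
    have h : i' = i := Finset.mem_singleton.mp hi'
    simpa [h] using I.w_pos i hi

/-- User-additivity: each artist's payoff is the sum of the payoffs they would obtain in
the single-user instances. -/
def UserAdditive (φ : Inst → ℕ → ℝ) : Prop :=
  ∀ I : Inst, ∀ j ∈ I.artists,
    φ I j = ∑ i ∈ I.users.attach, φ (I.single i.1 i.2) j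

/-- The `GlobalProp` rule: artists are paid proportionally to their share of total
engagement on the platform. -/
noncomputable def globalProp (α : ℝ) (I : Inst) (j : ℕ) : ℝ :=
  α * I.users.card * (∑ i ∈ I.users, I.w i j) /
    (∑ i ∈ I.users, ∑ j' ∈ I.artists, I.w i j')

/-- The `UserProp` rule: an `α` fraction of each user's fee is split proportionally to
that user's engagement. -/
noncomputable def userProp (α : ℝ) (I : Inst) (j : ℕ) : ℝ :=
  α * ∑ i ∈ I.users, (I.w i j / ∑ j' ∈ I.artists, I.w i j')

open Classical in
/-- The `UserEQ` rule: an `α` fraction of each user's fee is split equally among the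
artists with which the user has positive engagement. -/
noncomputable def userEQ (α : ℝ) (I : Inst) (j : ℕ) : ℝ :=
  α * ∑ i ∈ I.users,
    ((if 0 < I.w i j then (1 : ℝ) else 0) /
      ((I.artists.filter (fun j' => 0 < I.w i j')).card : ℝ))

/-- The `ScaledUserProp` rule, given a choice `γ I` of the scaling parameter for each
instance: user `i` contributes `min(γ·‖w_i‖₁, 1)`, split proportionally to `w_i`. -/
noncomputable def scaledUserProp (γ : Inst → ℝ) (I : Inst) (j : ℕ) : ℝ :=
  ∑ i ∈ I.users,
    (min (γ I * ∑ j' ∈ I.artists, I.w i j') 1 * (I.w i j / ∑ j' ∈ I.artists, I.w i j'))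

/-- `I' = (N, C, w')` arises from `I = (N \ N̂, C, w)` by adding the fake users `N̂`. -/
def IsFraudExtension (I I' : Inst) (Nhat : Finset ℕ) : Prop :=
  Nhat ⊆ I'.users ∧ I.users = I'.users \ Nhat ∧ I.artists = I'.artists ∧
    ∀ i ∈ I.users, ∀ j ∈ I.artists, I.w i j = I'.w i j

namespace Inst

theorem ext_of_eqOn {I I' : Inst} (hu : I.users = I'.users) (ha : I.artists = I'.artists)
    (hw : ∀ i ∈ I.users, ∀ j ∈ I.artists, I.w i j = I'.w i j) : I = I' := by
  have hw' : I.w = I'.w := by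
    funext i j
    by_cases hij : i ∈ I.users ∧ j ∈ I.artists
    · exact hw i hij.1 j hij.2
    · have h : I.w i j = 0 := by_contra fun h => hij (I.w_supp i j h)
      have h' : I'.w i j = 0 := by_contra fun h' => hij (hu ▸ ha ▸ I'.w_supp i j h')
      rw [h, h']
  cases I; cases I'
  cases hu; cases ha; cases hw'
  rfl

def restrict (I : Inst) (U : Finset ℕ) (hU : U.Nonempty) (hUI : U ⊆ I.users) : Inst where
  users := U
  artists := I.artists
  w i j := if i ∈ U then I.w i j else 0
  users_nonempty := hU
  w_nonneg i j := by
    split_ifs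
    exacts [I.w_nonneg i j, le_rfl]
  w_supp i j h := by
    split_ifs at h with hi
    exacts [⟨hi, (I.w_supp i j h).2⟩, absurd rfl h]
  w_pos i hi := by simpa [hi] using I.w_pos i (hUI hi)

end Inst

namespace IsFraudExtension

theorem eq_of_empty {I I' : Inst} (h : IsFraudExtension I I' ∅) : I = I' :=
  Inst.ext_of_eqOn (by rw [h.2.1, sdiff_empty]) h.2.2.1 h.2.2.2

theorem exists_split {I I' : Inst} {i : ℕ} {S : Finset ℕ} (hi : i ∉ S)
    (h : IsFraudExtension I I' (insert i S)) :
    ∃ J, IsFraudExtension I J {i} ∧ IsFraudExtension J I' S := by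
  obtain ⟨hsub, hu, ha, hw⟩ := h
  have hIJ : I.users ⊆ I'.users \ S := hu ▸ sdiff_subset_sdiff subset_rfl (subset_insert i S)
  let J := I'.restrict (I'.users \ S) (I.users_nonempty.mono hIJ) sdiff_subset
  have hJw : ∀ k ∈ I'.users \ S, ∀ j, J.w k j = I'.w k j := fun k hk j => if_pos hk
  refine ⟨J, ⟨?_, ?_, ha, fun k hk j hj => (hw k hk j hj).trans (hJw k (hIJ hk) j).symm⟩,
    ⟨(subset_insert i S).trans hsub, rfl, rfl, fun k hk j _ => hJw k hk j⟩⟩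
  · exact singleton_subset_iff.2 (mem_sdiff.2 ⟨hsub (mem_insert_self i S), hi⟩)
  · rw [hu, sdiff_insert]
    exact (sdiff_singleton_eq_erase i _).symm

end IsFraudExtension

/-- Add the fake users one at a time: each step gains at most `1`. -/
theorem SingleFraudProof.gain_le_card {φ : Inst → ℕ → ℝ} (hφ : SingleFraudProof φ)
    {Nhat : Finset ℕ} {I I' : Inst} (h : IsFraudExtension I I' Nhat) {Chat : Finset ℕ}
    (hC : Chat ⊆ I.artists) :
    (∑ j ∈ Chat, φ I' j) - (∑ j ∈ Chat, φ I j) ≤ (Nhat.card : ℝ) := by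
  induction Nhat using Finset.induction_on generalizing I with
  | empty => simp [h.eq_of_empty]
  | insert i S hi ih =>
    obtain ⟨J, hIJ, hJI'⟩ := h.exists_split hi
    obtain ⟨hsub, hu, ha, hw⟩ := hIJ
    have step_i := hφ I J {i} (card_singleton i) hsub hu ha hw Chat hC
    have step_S := ih hJI' (ha ▸ hC)
    rw [card_insert_of_notMem hi]
    push_cast
    linarith

theorem stmt0_general (φ : Inst → ℕ → ℝ) :
    FraudProof φ ↔ SingleFraudProof φ := by
  constructor
  · intro hFP I I' Nhat hcard hsub hu ha hw Chat hC
    simpa [hcard] using hFP I I' trivial trivial Nhat hsub hu ha hw Chat hC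
  · intro hSFP I I' _ _ Nhat hsub hu ha hw Chat hC
    exact hSFP.gain_le_card ⟨hsub, hu, ha, hw⟩ hC

theorem stmt0 (α : ℝ) (hα : α ∈ Set.Ioc (0 : ℝ) 1)
    (φ : Inst → ℕ → ℝ) (hφ : IsRule α φ) :
    FraudProof φ ↔ SingleFraudProof φ :=
  stmt0_general φ
end

section
/- A payment rule φ is bribery-proof if and only if it is single-user bribery-proof. -/
open Finset

/-!
Move from `I` to `I'` one bribed user at a time: replacing the engagement vector of a single
bribed user by its value in `I'` is a single-user bribery, and leaves one bribed user fewer.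
The gains telescope, so single-user bribery-proofness bounds the total gain by the number of
bribed users.
-/

namespace Inst

lemma ext_of_w_eq {I I' : Inst} (hu : I.users = I'.users) (ha : I.artists = I'.artists)
    (hw : I.w = I'.w) : I = I' := by
  cases I; cases I'
  subst hu ha hw
  rfl

lemma w_eq_zero_of_notMem_users (I : Inst) {i : ℕ} (hi : i ∉ I.users) (j : ℕ) :
    I.w i j = 0 :=
  by_contra fun h => hi (I.w_supp i j h).1

lemma w_eq_zero_of_notMem_artists (I : Inst) (i : ℕ) {j : ℕ} (hj : j ∉ I.artists) :
    I.w i j = 0 :=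
  by_contra fun h => hj (I.w_supp i j h).2

def replaceUser (I I' : Inst) (i : ℕ) (hi : i ∈ I.users) (hi' : i ∈ I'.users)
    (ha : I.artists = I'.artists) : Inst where
  users := I.users
  artists := I.artists
  w := Function.update I.w i (I'.w i)
  users_nonempty := I.users_nonempty
  w_nonneg i' j := by
    rcases eq_or_ne i' i with rfl | hne
    · simpa using I'.w_nonneg i' j
    · simpa [hne] using I.w_nonneg i' j
  w_supp i' j h := by
    rcases eq_or_ne i' i with rfl | hne
    · simp only [Function.update_self] at h
      exact ⟨hi, ha ▸ (I'.w_supp i' j h).2⟩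
    · rw [Function.update_of_ne hne] at h
      exact I.w_supp i' j h
  w_pos i' hi'' := by
    rcases eq_or_ne i' i with rfl | hne
    · simpa [ha] using I'.w_pos i' hi'
    · simpa [hne] using I.w_pos i' hi''

end Inst

open Classical in
noncomputable def bribedUsers (I I' : Inst) : Finset ℕ :=
  I.users.filter (fun i => ∃ j ∈ I.artists, I.w i j ≠ I'.w i j)

lemma card_bribedUsers (I I' : Inst) : (bribedUsers I I').card = bribedCount I I' := rfl

lemma mem_bribedUsers {I I' : Inst} {i : ℕ} :
    i ∈ bribedUsers I I' ↔ i ∈ I.users ∧ ∃ j ∈ I.artists, I.w i j ≠ I'.w i j := by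
  classical
  simp [bribedUsers]

lemma eq_of_bribedCount_eq_zero {I I' : Inst} (hu : I.users = I'.users)
    (ha : I.artists = I'.artists) (h : bribedCount I I' = 0) : I = I' := by
  rw [← card_bribedUsers, card_eq_zero, eq_empty_iff_forall_notMem] at h
  refine Inst.ext_of_w_eq hu ha (funext₂ fun i j => ?_)
  by_cases hi : i ∈ I.users
  · by_cases hj : j ∈ I.artists
    · by_contra hne
      exact h i (mem_bribedUsers.2 ⟨hi, j, hj, hne⟩)
    · rw [I.w_eq_zero_of_notMem_artists i hj, I'.w_eq_zero_of_notMem_artists i (ha ▸ hj)]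
  · rw [I.w_eq_zero_of_notMem_users hi, I'.w_eq_zero_of_notMem_users (hu ▸ hi)]

lemma bribedUsers_replaceUser_left {I I' : Inst} {i : ℕ} (hi : i ∈ I.users)
    (hi' : i ∈ I'.users) (ha : I.artists = I'.artists) (hbribed : i ∈ bribedUsers I I') :
    bribedUsers I (I.replaceUser I' i hi hi' ha) = {i} := by
  ext i'
  simp only [mem_bribedUsers, mem_singleton, Inst.replaceUser]
  constructor
  · rintro ⟨-, j, -, hne⟩
    by_contra hii
    simp [hii] at hne
  · rintro rfl
    simpa using mem_bribedUsers.1 hbribed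

lemma bribedUsers_replaceUser_right {I I' : Inst} {i : ℕ} (hi : i ∈ I.users)
    (hi' : i ∈ I'.users) (ha : I.artists = I'.artists) :
    bribedUsers (I.replaceUser I' i hi hi' ha) I' = (bribedUsers I I').erase i := by
  ext i'
  simp only [mem_erase, mem_bribedUsers, Inst.replaceUser]
  rcases eq_or_ne i' i with rfl | hii
  · simp
  · simp [hii]

theorem SingleBriberyProof.sum_sub_sum_le_of_bribedCount_eq {φ : Inst → ℕ → ℝ}
    (h : SingleBriberyProof φ) (k : ℕ) :
    ∀ I I' : Inst, I.users = I'.users → I.artists = I'.artists → bribedCount I I' = k →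
      ∀ Chat ⊆ I.artists, (∑ j ∈ Chat, φ I' j) - (∑ j ∈ Chat, φ I j) ≤ k := by
  induction k with
  | zero =>
    intro I I' hu ha hk Chat _
    simp [eq_of_bribedCount_eq_zero hu ha hk]
  | succ k ih =>
    intro I I' hu ha hk Chat hC
    obtain ⟨i, hbribed⟩ : (bribedUsers I I').Nonempty := by
      rw [← card_pos, card_bribedUsers, hk]
      exact k.succ_pos
    have hi := (mem_bribedUsers.1 hbribed).1
    set J := I.replaceUser I' i hi (hu ▸ hi) ha
    have hIJ : bribedCount I J = 1 := by
      rw [← card_bribedUsers, bribedUsers_replaceUser_left _ _ _ hbribed, card_singleton]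
    have hJI' : bribedCount J I' = k := by
      rw [← card_bribedUsers, bribedUsers_replaceUser_right, card_erase_of_mem hbribed,
        card_bribedUsers, hk, Nat.add_sub_cancel]
    have gain_IJ := h I J rfl rfl hIJ Chat hC
    have gain_JI' := ih J I' hu ha hJI' Chat hC
    push_cast
    linarith

theorem stmt1_general
    (φ : Inst → ℕ → ℝ) :
    BriberyProof φ ↔ SingleBriberyProof φ := by
  constructor
  · intro h I I' hu ha hk Chat hC
    simpa [hk] using h I I' trivial trivial hu ha Chat hC
  · intro h I I' _ _ hu ha Chat hC
    exact h.sum_sub_sum_le_of_bribedCount_eq _ I I' hu ha rfl Chat hC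

theorem stmt1 (α : ℝ) (hα : α ∈ Set.Ioc (0 : ℝ) 1)
    (φ : Inst → ℕ → ℝ) (hφ : IsRule α φ) :
    BriberyProof φ ↔ SingleBriberyProof φ :=
  stmt1_general φ
end

section
/- If α = 1, then every fraud-proof payment rule is also bribery-proof. -/
open Finset

def Inst.restrict_s2 (I : Inst) (S : Finset ℕ) (hS : S.Nonempty) (hSI : S ⊆ I.users) : Inst where
  users := S
  artists := I.artists
  w i j := if i ∈ S then I.w i j else 0
  users_nonempty := hS
  w_nonneg i j := by
    split
    · exact I.w_nonneg i j
    · exact le_rfl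
  w_supp i j h := by
    split at h
    · exact ⟨‹_›, (I.w_supp i j h).2⟩
    · exact absurd rfl h
  w_pos i hi := by
    simpa [hi] using I.w_pos i (hSI hi)

theorem IsRuleOn.sum_nonneg {P : Inst → Prop} {α : ℝ} {φ : Inst → ℕ → ℝ}
    (hφ : IsRuleOn P α φ) {I : Inst} (hI : P I) {Chat : Finset ℕ} (hC : Chat ⊆ I.artists) :
    0 ≤ ∑ j ∈ Chat, φ I j :=
  Finset.sum_nonneg fun j hj => (hφ I hI).1 j (hC hj)

theorem IsRuleOn.sum_le {P : Inst → Prop} {α : ℝ} {φ : Inst → ℕ → ℝ}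
    (hφ : IsRuleOn P α φ) {I : Inst} (hI : P I) {Chat : Finset ℕ} (hC : Chat ⊆ I.artists) :
    ∑ j ∈ Chat, φ I j ≤ α * I.users.card :=
  (hφ I hI).2 ▸ Finset.sum_le_sum_of_subset_of_nonneg hC fun j hj _ => (hφ I hI).1 j hj

/-- With `α = 1`, removing the users `N̂` lowers the total payment by exactly `|N̂|`, and
fraud-proofness caps the gain of the complementary coalition `C \ Ĉ` at `|N̂|`; so no coalition
`Ĉ` gains from the removal. -/
theorem FraudProof.sum_le_of_removeUsers {φ : Inst → ℕ → ℝ} (hφ : IsRule 1 φ)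
    (hfp : FraudProof φ) {I I' : Inst} {Nhat : Finset ℕ} (hsub : Nhat ⊆ I'.users)
    (hu : I.users = I'.users \ Nhat) (ha : I.artists = I'.artists)
    (hw : ∀ i ∈ I.users, ∀ j ∈ I.artists, I.w i j = I'.w i j) {Chat : Finset ℕ}
    (hC : Chat ⊆ I.artists) :
    ∑ j ∈ Chat, φ I j ≤ ∑ j ∈ Chat, φ I' j := by
  have hgain := hfp I I' trivial trivial Nhat hsub hu ha hw (I.artists \ Chat) sdiff_subset
  have hsplit : ∀ K : Inst, K.artists = I.artists →
      ∑ j ∈ I.artists \ Chat, φ K j = K.users.card - ∑ j ∈ Chat, φ K j := by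
    intro K hK
    rw [eq_sub_iff_add_eq, Finset.sum_sdiff hC, ← hK, (hφ K trivial).2, one_mul]
  have hcard : (I.users.card : ℝ) = I'.users.card - Nhat.card := by
    rw [hu, Finset.card_sdiff_of_subset hsub, Nat.cast_sub (Finset.card_le_card hsub)]
  rw [hsplit I rfl, hsplit I' ha.symm, hcard] at hgain
  linarith

theorem stmt2 (φ : Inst → ℕ → ℝ) (hφ : IsRule 1 φ) (hfp : FraudProof φ) :
    BriberyProof φ := by
  classical
  intro I I' _ _ hu ha Chat hC
  set B := I.users.filter (fun i => ∃ j ∈ I.artists, I.w i j ≠ I'.w i j) with hB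
  have hBcount : bribedCount I I' = B.card := by rw [bribedCount, hB]
  have hBsub : B ⊆ I.users := filter_subset _ _
  have hhonest : ∀ i ∈ I.users \ B, ∀ j ∈ I.artists, I.w i j = I'.w i j := by
    intro i hi j hj
    by_contra hne
    exact (mem_sdiff.mp hi).2 (mem_filter.mpr ⟨(mem_sdiff.mp hi).1, j, hj, hne⟩)
  rw [hBcount]
  rcases (I.users \ B).eq_empty_or_nonempty with hall | hne
  · have hcard : I'.users.card = B.card :=
      hu ▸ le_antisymm (card_le_card (sdiff_eq_empty_iff_subset.mp hall)) (card_le_card hBsub)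
    have hupper := (hφ.sum_le trivial (ha ▸ hC)).trans_eq (one_mul _)
    have hlower := hφ.sum_nonneg trivial hC
    rw [hcard] at hupper
    linarith
  · -- `J` keeps only the honest users; `I'` is a fraud on `J`, and `I` pays `Ĉ` at least as `J`.
    let J := I.restrict_s2 (I.users \ B) hne sdiff_subset
    have hJw : ∀ i ∈ J.users, ∀ j ∈ J.artists, J.w i j = I.w i j :=
      fun i hi _ _ => if_pos hi
    have hfraud := hfp J I' trivial trivial B (hu ▸ hBsub) (by rw [← hu]; rfl) ha
      (fun i hi j hj => (hJw i hi j hj).trans (hhonest i hi j hj)) Chat hC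
    have hmono := hfp.sum_le_of_removeUsers hφ (I := J) hBsub rfl rfl hJw hC
    linarith
end

section
/- For every α ∈ (0,1], there exists a payment rule on instances with exactly two artists that is anonymous, neutral, satisfies no free-ridership, is bribery-proof, but is not fraud-proof. -/
open Finset

/-!
Each user splits an `α` share of their fee between the two artists according to a rule that
depends only on their own engagement vector and on the number of users: proportionally while
there are at most `M` users, proportionally to squared engagement beyond. Bribery leaves the
number of users unchanged, and each bribed user moves at most `α ≤ 1`, so the rule is
bribery-proof. A single fake user, however, pushes the count past `M` and switches every genuine
user with engagement `(1, 2)` from giving `2/3` to giving `4/5` of their share to the second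
artist, a gain of `α (2M/15 + 4/5)`, which exceeds `1` once `α M ≥ 8`.
-/

/-- `share n b t` is the part of one user's unit that goes to an artist with engagement `b`, when
the user's total engagement is `t` and there are `n` users. -/
structure IsPairSplit (share : ℕ → ℝ → ℝ → ℝ) : Prop where
  nonneg : ∀ n b t, 0 ≤ b → 0 ≤ t → 0 ≤ share n b t
  add_eq_one : ∀ n a b, 0 ≤ a → 0 ≤ b → 0 < a + b → share n a (a + b) + share n b (a + b) = 1

noncomputable def perUserRule (α : ℝ) (share : ℕ → ℝ → ℝ → ℝ) (I : Inst) (j : ℕ) : ℝ :=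
  α * ∑ i ∈ I.users, share I.users.card (I.w i j) (∑ j' ∈ I.artists, I.w i j')

noncomputable def coalitionShare (share : ℕ → ℝ → ℝ → ℝ) (I : Inst) (Chat : Finset ℕ)
    (i : ℕ) : ℝ :=
  ∑ j ∈ Chat, share I.users.card (I.w i j) (∑ j' ∈ I.artists, I.w i j')

theorem Equiv.Perm.sum_comp_of_mapsTo {ι M : Type*} [DecidableEq ι] [AddCommMonoid M]
    (σ : Equiv.Perm ι) {s : Finset ι} (hσ : ∀ i ∈ s, σ i ∈ s) (f : ι → M) :
    ∑ i ∈ s, f (σ i) = ∑ i ∈ s, f i := by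
  have himage : s.image σ = s :=
    eq_of_subset_of_card_le (fun _ hx => by obtain ⟨i, hi, rfl⟩ := mem_image.mp hx; exact hσ i hi)
      (card_image_of_injective _ σ.injective).ge
  conv_rhs => rw [← himage]
  exact (sum_image fun _ _ _ _ h => σ.injective h).symm

theorem Finset.sum_le_card_filter_of_le_one {ι : Type*} {s : Finset ι} {p : ι → Prop}
    [DecidablePred p] {d : ι → ℝ} (hp : ∀ i ∈ s, p i → d i ≤ 1) (hnp : ∀ i ∈ s, ¬ p i → d i ≤ 0) :
    ∑ i ∈ s, d i ≤ (s.filter p).card := by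
  rw [← sum_filter_add_sum_filter_not s p]
  have hin : ∑ i ∈ s.filter p, d i ≤ (s.filter p).card := by
    simpa using sum_le_card_nsmul _ d 1 fun i hi => hp i (mem_filter.mp hi).1 (mem_filter.mp hi).2
  have hout : ∑ i ∈ s.filter (¬ p ·), d i ≤ 0 :=
    sum_nonpos fun i hi => hnp i (mem_filter.mp hi).1 (mem_filter.mp hi).2
  linarith

section perUserRule

variable {α : ℝ} {share : ℕ → ℝ → ℝ → ℝ}

theorem coalitionShare_nonneg (hs : IsPairSplit share) (I : Inst) (Chat : Finset ℕ) (i : ℕ) :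
    0 ≤ coalitionShare share I Chat i :=
  sum_nonneg fun j _ => hs.nonneg _ _ _ (I.w_nonneg i j) (sum_nonneg fun j' _ => I.w_nonneg i j')

theorem coalitionShare_artists (hs : IsPairSplit share) {I : Inst} (hI : I.artists.card = 2)
    {i : ℕ} (hi : i ∈ I.users) : coalitionShare share I I.artists i = 1 := by
  obtain ⟨a, b, hab, hC⟩ := card_eq_two.mp hI
  have htotal := I.w_pos i hi
  simp only [coalitionShare, hC, sum_pair hab] at htotal ⊢
  exact hs.add_eq_one _ _ _ (I.w_nonneg i a) (I.w_nonneg i b) htotal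

theorem coalitionShare_le_one (hs : IsPairSplit share) {I : Inst} (hI : I.artists.card = 2)
    {Chat : Finset ℕ} (hChat : Chat ⊆ I.artists) {i : ℕ} (hi : i ∈ I.users) :
    coalitionShare share I Chat i ≤ 1 := by
  rw [← coalitionShare_artists hs hI hi]
  exact sum_le_sum_of_subset_of_nonneg hChat fun j _ _ =>
    hs.nonneg _ _ _ (I.w_nonneg i j) (sum_nonneg fun j' _ => I.w_nonneg i j')

theorem coalitionShare_congr {I I' : Inst} (hu : I.users = I'.users)
    (hC : I.artists = I'.artists) {Chat : Finset ℕ} (hChat : Chat ⊆ I.artists) {i : ℕ}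
    (hw : ∀ j ∈ I.artists, I.w i j = I'.w i j) :
    coalitionShare share I Chat i = coalitionShare share I' Chat i := by
  unfold coalitionShare
  rw [← hu, ← hC, sum_congr rfl hw]
  exact sum_congr rfl fun j hj => by rw [hw j (hChat hj)]

theorem sum_perUserRule (I : Inst) (Chat : Finset ℕ) :
    ∑ j ∈ Chat, perUserRule α share I j = α * ∑ i ∈ I.users, coalitionShare share I Chat i := by
  simp only [perUserRule, coalitionShare, ← mul_sum]
  rw [sum_comm]

theorem perUserRule_isRuleOn (hα : 0 ≤ α) (hs : IsPairSplit share) :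
    IsRuleOn (fun I => I.artists.card = 2) α (perUserRule α share) := by
  intro I hI
  refine ⟨fun j _ => mul_nonneg hα <| sum_nonneg fun i _ =>
    hs.nonneg _ _ _ (I.w_nonneg i j) (sum_nonneg fun j' _ => I.w_nonneg i j'), ?_⟩
  rw [sum_perUserRule, sum_congr rfl fun i hi => coalitionShare_artists hs hI hi]
  simp

theorem perUserRule_anonymousOn (P : Inst → Prop) : AnonymousOn P (perUserRule α share) := by
  intro I I' _ _ hu hC σ hσ hw j hj
  unfold perUserRule
  rw [← hu, ← hC]
  conv_rhs => rw [← Equiv.Perm.sum_comp_of_mapsTo σ hσ]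
  refine congrArg (α * ·) (sum_congr rfl fun i hi => ?_)
  rw [hw i hi j hj, sum_congr rfl (hw i hi)]

theorem perUserRule_neutralOn (P : Inst → Prop) : NeutralOn P (perUserRule α share) := by
  intro I I' _ _ hu hC σ hσ hw j hj
  unfold perUserRule
  rw [← hu, ← hC]
  refine congrArg (α * ·) (sum_congr rfl fun i hi => ?_)
  rw [hw i hi j hj, sum_congr rfl (hw i hi), Equiv.Perm.sum_comp_of_mapsTo σ hσ]

theorem perUserRule_noFreeRideOn (P : Inst → Prop) (h0 : ∀ n t, share n 0 t = 0) :
    NoFreeRideOn P (perUserRule α share) := by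
  intro I _ j _ hzero
  have hw : ∀ i ∈ I.users, I.w i j = 0 :=
    (sum_eq_zero_iff_of_nonneg fun i _ => I.w_nonneg i j).mp hzero
  unfold perUserRule
  rw [sum_eq_zero fun i hi => by rw [hw i hi, h0], mul_zero]

theorem perUserRule_briberyProofOn (hα₀ : 0 ≤ α) (hα₁ : α ≤ 1) (hs : IsPairSplit share) :
    BriberyProofOn (fun I => I.artists.card = 2) (perUserRule α share) := by
  classical
  intro I I' hI hI' hu hC Chat hChat
  have hChat' : Chat ⊆ I'.artists := hC ▸ hChat
  have hgain : ∑ i ∈ I.users, (coalitionShare share I' Chat i - coalitionShare share I Chat i)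
      ≤ bribedCount I I' := by
    refine sum_le_card_filter_of_le_one (fun i hi _ => ?_) (fun i _ hnot => ?_)
    · linarith [coalitionShare_le_one hs hI' hChat' (hu ▸ hi), coalitionShare_nonneg hs I Chat i]
    · push Not at hnot
      rw [coalitionShare_congr hu hC hChat hnot, sub_self]
  calc (∑ j ∈ Chat, perUserRule α share I' j) - ∑ j ∈ Chat, perUserRule α share I j
      = α * ∑ i ∈ I.users, (coalitionShare share I' Chat i - coalitionShare share I Chat i) := by
        rw [sum_perUserRule, sum_perUserRule, sum_sub_distrib, mul_sub, hu]
    _ ≤ α * bribedCount I I' := mul_le_mul_of_nonneg_left hgain hα₀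
    _ ≤ bribedCount I I' := mul_le_of_le_one_left (Nat.cast_nonneg _) hα₁

end perUserRule

noncomputable def replicateInst (n : ℕ) {a b : ℝ} (ha : 0 ≤ a) (hb : 0 ≤ b) (hab : 0 < a + b) :
    Inst where
  users := range (n + 1)
  artists := {0, 1}
  w i j := if i ≤ n then (if j = 0 then a else if j = 1 then b else 0) else 0
  users_nonempty := ⟨0, by simp⟩
  w_nonneg i j := by split_ifs <;> first | assumption | exact le_rfl
  w_supp i j h := by
    split_ifs at h <;> simp_all
  w_pos i hi := by
    have hi : i ≤ n := Nat.lt_succ_iff.mp (mem_range.mp hi)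
    simpa [hi] using hab

section replicateInst

variable {n : ℕ} {a b : ℝ} (ha : 0 ≤ a) (hb : 0 ≤ b) (hab : 0 < a + b)

theorem perUserRule_replicateInst (α : ℝ) (share : ℕ → ℝ → ℝ → ℝ) :
    perUserRule α share (replicateInst n ha hb hab) 1 = α * ((n + 1) * share (n + 1) b (a + b)) := by
  have hw : ∀ i ∈ (replicateInst n ha hb hab).users,
      share (n + 1) ((replicateInst n ha hb hab).w i 1)
        (∑ j ∈ (replicateInst n ha hb hab).artists, (replicateInst n ha hb hab).w i j)
        = share (n + 1) b (a + b) := by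
    intro i hi
    have hi : i ≤ n := Nat.lt_succ_iff.mp (mem_range.mp hi)
    simp [replicateInst, hi]
  unfold perUserRule
  rw [show (replicateInst n ha hb hab).users.card = n + 1 from card_range _, sum_congr rfl hw]
  simp [replicateInst]

end replicateInst

theorem perUserRule_not_fraudProofOn {α : ℝ} {share : ℕ → ℝ → ℝ → ℝ} {n : ℕ} {a b : ℝ}
    (ha : 0 ≤ a) (hb : 0 ≤ b) (hab : 0 < a + b)
    (hgain : 1 < α * ((n + 2) * share (n + 2) b (a + b) - (n + 1) * share (n + 1) b (a + b))) :
    ¬ FraudProofOn (fun I => I.artists.card = 2) (perUserRule α share) := by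
  intro hfraud
  have hfake := hfraud (replicateInst n ha hb hab) (replicateInst (n + 1) ha hb hab) rfl rfl {n + 1}
    (by simp [replicateInst]) (by ext i; simp [replicateInst]; omega) rfl
    (fun i hi j _ => by
      have hi : i ≤ n := Nat.lt_succ_iff.mp (mem_range.mp hi)
      simp [replicateInst, hi, show i ≤ n + 1 by omega])
    {1} (by simp [replicateInst])
  rw [sum_singleton, sum_singleton, perUserRule_replicateInst, perUserRule_replicateInst,
    card_singleton] at hfake
  push_cast at hfake
  linarith

noncomputable def thresholdShare (M n : ℕ) (b t : ℝ) : ℝ :=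
  if n ≤ M then b / t else b ^ 2 / (b ^ 2 + (t - b) ^ 2)

theorem isPairSplit_thresholdShare (M : ℕ) : IsPairSplit (thresholdShare M) where
  nonneg n b t hb ht := by
    unfold thresholdShare
    split_ifs
    · exact div_nonneg hb ht
    · positivity
  add_eq_one n a b ha hb hab := by
    unfold thresholdShare
    split_ifs
    · rw [← add_div, div_self hab.ne']
    · have hsq : 0 < a ^ 2 + b ^ 2 := by nlinarith [mul_pos hab hab]
      rw [add_sub_cancel_left, add_sub_cancel_right, add_comm (b ^ 2), ← add_div,
        div_self hsq.ne']

theorem thresholdShare_zero (M n : ℕ) (t : ℝ) : thresholdShare M n 0 t = 0 := by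
  simp [thresholdShare]

theorem stmt3 (α : ℝ) (hα : α ∈ Set.Ioc (0 : ℝ) 1) :
    ∃ φ : Inst → ℕ → ℝ,
      IsRuleOn (fun I => I.artists.card = 2) α φ ∧
      AnonymousOn (fun I => I.artists.card = 2) φ ∧
      NeutralOn (fun I => I.artists.card = 2) φ ∧
      NoFreeRideOn (fun I => I.artists.card = 2) φ ∧
      BriberyProofOn (fun I => I.artists.card = 2) φ ∧
      ¬ FraudProofOn (fun I => I.artists.card = 2) φ := by
  obtain ⟨hα₀, hα₁⟩ := hα
  obtain ⟨n, hn⟩ := exists_nat_gt (8 / α)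
  have hαn : 8 < α * n := by rwa [div_lt_iff₀ hα₀, mul_comm] at hn
  have hs := isPairSplit_thresholdShare (n + 1)
  refine ⟨perUserRule α (thresholdShare (n + 1)), perUserRule_isRuleOn hα₀.le hs,
    perUserRule_anonymousOn _, perUserRule_neutralOn _,
    perUserRule_noFreeRideOn _ (thresholdShare_zero _), perUserRule_briberyProofOn hα₀.le hα₁ hs,
    perUserRule_not_fraudProofOn (n := n) zero_le_one zero_le_two (by norm_num) ?_⟩
  have hsplit : thresholdShare (n + 1) (n + 2) 2 (1 + 2) = 4 / 5 ∧
      thresholdShare (n + 1) (n + 1) 2 (1 + 2) = 2 / 3 := by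
    norm_num [thresholdShare]
  rw [hsplit.1, hsplit.2]
  linarith
end

section
/- For every α ∈ (0,1), there exists a payment rule on instances with exactly two artists that is fraud-proof but not bribery-proof. -/
open Finset

/-! On two-artist instances, pay the artist with the smaller label
`T = clamp_[0, α n] ((2 - α) S - (1 - α) n)`, where `S = ∑ᵢ min (wᵢ, 1)` is its capped engagement,
and the other artist the remaining `α n - T`. A fake user raises `S` by at most `1` and `n` by
exactly `1`, so it moves `T` up by at most `(2 - α) - (1 - α) = 1` and down by at most `1 - α`;
as the total grows by `α`, neither artist gains more than `1`. A bribed user, however, can raise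
`S` by a full `1` without changing `n`, moving `T` by `2 - α > 1`. -/

theorem max_zero_min_le_add {a b a' b' u : ℝ} (hu : 0 ≤ u) (ha : a' ≤ a + u) (hb : b' ≤ b + u) :
    max 0 (min a' b') ≤ max 0 (min a b) + u := by
  refine max_le (add_nonneg (le_max_left 0 _) hu) ?_
  calc min a' b' ≤ min (a + u) (b + u) := min_le_min ha hb
    _ = min a b + u := min_add_add_right a b u
    _ ≤ max 0 (min a b) + u := by gcongr; exact le_max_right 0 _

theorem sum_sub_sum_le_of_subset_of_card_eq_two {ι : Type*} {C S : Finset ι} {f g : ι → ℝ}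
    {d : ℝ} (hC : C.card = 2) (hS : S ⊆ C) (hd : 0 ≤ d) (hsingle : ∀ j ∈ C, f j - g j ≤ d)
    (htotal : ∑ j ∈ C, f j - ∑ j ∈ C, g j ≤ d) : ∑ j ∈ S, f j - ∑ j ∈ S, g j ≤ d := by
  have hle : S.card ≤ 2 := hC ▸ card_le_card hS
  interval_cases h : S.card
  · simpa [card_eq_zero.mp h] using hd
  · obtain ⟨j, rfl⟩ := card_eq_one.mp h
    simpa using hsingle j (hS (mem_singleton_self j))
  · rwa [eq_of_subset_of_card_le hS (by omega)]

theorem card_users_eq_add_of_fraud {I I' : Inst} {Nhat : Finset ℕ} (hsub : Nhat ⊆ I'.users)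
    (husers : I.users = I'.users \ Nhat) :
    (I'.users.card : ℝ) = I.users.card + Nhat.card := by
  rw [husers]
  exact_mod_cast (card_sdiff_add_card_eq_card hsub).symm

noncomputable section

def leadArtist (I : Inst) : ℕ := sInf (I.artists : Set ℕ)

theorem leadArtist_mem {I : Inst} (h : I.artists.Nonempty) : leadArtist I ∈ I.artists :=
  mem_coe.mp (Nat.sInf_mem (coe_nonempty.mpr h))

def cappedEngagement (I : Inst) : ℝ := ∑ i ∈ I.users, min (I.w i (leadArtist I)) 1

def leadPay (α : ℝ) (I : Inst) : ℝ :=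
  max 0 (min (α * I.users.card) ((2 - α) * cappedEngagement I - (1 - α) * I.users.card))

def leadRule (α : ℝ) (I : Inst) (j : ℕ) : ℝ :=
  if j = leadArtist I then leadPay α I
  else if j ∈ I.artists then α * I.users.card - leadPay α I else 0

theorem leadPay_nonneg (α : ℝ) (I : Inst) : 0 ≤ leadPay α I := le_max_left 0 _

theorem leadPay_le {α : ℝ} (hα : 0 ≤ α) (I : Inst) : leadPay α I ≤ α * I.users.card :=
  max_le (by positivity) (min_le_left _ _)

theorem leadRule_of_ne {α : ℝ} {I : Inst} {j : ℕ} (hj : j ∈ I.artists) (hne : j ≠ leadArtist I) :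
    leadRule α I j = α * I.users.card - leadPay α I := by
  rw [leadRule, if_neg hne, if_pos hj]

theorem sum_leadRule (α : ℝ) {I : Inst} (hI : I.artists.card = 2) :
    ∑ j ∈ I.artists, leadRule α I j = α * I.users.card := by
  have hlead := leadArtist_mem (card_pos.mp (by omega : 0 < I.artists.card))
  rw [← add_sum_erase _ _ hlead,
    sum_congr rfl fun j hj => leadRule_of_ne (mem_of_mem_erase hj) (ne_of_mem_erase hj),
    sum_const, card_erase_of_mem hlead, hI, leadRule, if_pos rfl]
  simp

theorem leadRule_isRuleOn {α : ℝ} (hα : 0 ≤ α) :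
    IsRuleOn (fun I => I.artists.card = 2) α (leadRule α) := by
  refine fun I hI => ⟨fun j hj => ?_, sum_leadRule α hI⟩
  by_cases hlead : j = leadArtist I
  · simpa only [leadRule, if_pos hlead] using leadPay_nonneg α I
  · rw [leadRule_of_ne hj hlead]
    linarith [leadPay_le hα I]

section Fraud

variable {I I' : Inst} {Nhat : Finset ℕ}

theorem cappedEngagement_eq_add_of_fraud (hI : I.artists.Nonempty) (hsub : Nhat ⊆ I'.users)
    (husers : I.users = I'.users \ Nhat) (hart : I.artists = I'.artists)
    (hw : ∀ i ∈ I.users, ∀ j ∈ I.artists, I.w i j = I'.w i j) :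
    cappedEngagement I' = cappedEngagement I + ∑ i ∈ Nhat, min (I'.w i (leadArtist I)) 1 := by
  have hlead : leadArtist I' = leadArtist I := by rw [leadArtist, leadArtist, hart]
  rw [cappedEngagement, cappedEngagement, hlead, ← sum_sdiff hsub, ← husers]
  congr 1
  exact sum_congr rfl fun i hi => by rw [hw i hi _ (leadArtist_mem hI)]

theorem leadPay_fraud_bounds {α : ℝ} (hα : α ≤ 1) (hI : I.artists.Nonempty)
    (hsub : Nhat ⊆ I'.users) (husers : I.users = I'.users \ Nhat) (hart : I.artists = I'.artists)
    (hw : ∀ i ∈ I.users, ∀ j ∈ I.artists, I.w i j = I'.w i j) :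
    leadPay α I' ≤ leadPay α I + Nhat.card ∧
      leadPay α I ≤ leadPay α I' + (1 - α) * Nhat.card := by
  set e := ∑ i ∈ Nhat, min (I'.w i (leadArtist I)) 1
  have he0 : 0 ≤ e := sum_nonneg fun i _ => le_min (I'.w_nonneg i _) zero_le_one
  have he1 : e ≤ Nhat.card := by
    simpa using sum_le_sum fun i (_ : i ∈ Nhat) => min_le_right (I'.w i (leadArtist I)) 1
  have hd : (0 : ℝ) ≤ Nhat.card := Nat.cast_nonneg _
  rw [leadPay, leadPay, cappedEngagement_eq_add_of_fraud hI hsub husers hart hw,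
    card_users_eq_add_of_fraud hsub husers]
  constructor
  · exact max_zero_min_le_add hd (by nlinarith) (by nlinarith)
  · exact max_zero_min_le_add (by nlinarith) (by nlinarith) (by nlinarith)

end Fraud

theorem leadRule_fraudProofOn {α : ℝ} (hα : α ≤ 1) :
    FraudProofOn (fun I => I.artists.card = 2) (leadRule α) := by
  intro I I' hI hI' Nhat hsub husers hart hw Chat hChat
  have hne : I.artists.Nonempty := card_pos.mp (by omega)
  obtain ⟨hup, hdown⟩ := leadPay_fraud_bounds hα hne hsub husers hart hw
  have hlead : leadArtist I' = leadArtist I := by rw [leadArtist, leadArtist, hart]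
  have hn := card_users_eq_add_of_fraud hsub husers
  have hd : (0 : ℝ) ≤ Nhat.card := Nat.cast_nonneg _
  refine sum_sub_sum_le_of_subset_of_card_eq_two hI hChat hd (fun j hj => ?_) ?_
  · by_cases hj1 : j = leadArtist I
    · simp only [leadRule, hlead, if_pos hj1]
      linarith
    · rw [leadRule_of_ne hj hj1, leadRule_of_ne (hart ▸ hj) (hlead ▸ hj1), hn]
      linarith
  · rw [hart, sum_leadRule α hI', ← hart, sum_leadRule α hI, hn]
    nlinarith

def bribeInst (m : ℕ) (b x : ℝ) (hb : 0 ≤ b) (hx : 0 ≤ x) : Inst where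
  users := range (m + 1)
  artists := {0, 1}
  w i j := if i < m + 1 then (if j = 0 then (if i = 0 then b else x) else if j = 1 then 1 else 0)
    else 0
  users_nonempty := nonempty_range_add_one
  w_nonneg i j := by split_ifs <;> first | assumption | norm_num
  w_supp i j h := by split_ifs at h <;> simp_all
  w_pos i hi := by
    simp only [mem_range.mp hi, sum_pair zero_ne_one, if_true, one_ne_zero, if_false]
    split_ifs <;> linarith

section Bribery

variable {m : ℕ} {b x : ℝ} {hb : 0 ≤ b} {hx : 0 ≤ x}

theorem leadArtist_bribeInst : leadArtist (bribeInst m b x hb hx) = 0 :=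
  Nat.sInf_eq_zero.mpr (Or.inl (by simp [bribeInst]))

theorem cappedEngagement_bribeInst :
    cappedEngagement (bribeInst m b x hb hx) = min b 1 + m * min x 1 := by
  have hw : ∀ i < m, (bribeInst m b x hb hx).w (i + 1) 0 = x := fun i hi => by
    simp [bribeInst, hi]
  rw [cappedEngagement, leadArtist_bribeInst]
  change ∑ i ∈ range (m + 1), _ = _
  rw [sum_range_succ', add_comm, sum_congr rfl fun i hi => by rw [hw i (mem_range.mp hi)]]
  simp [bribeInst]

theorem bribedCount_bribeInst {b' : ℝ} {hb' : 0 ≤ b'} (hbb' : b ≠ b') :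
    bribedCount (bribeInst m b x hb hx) (bribeInst m b' x hb' hx) = 1 := by
  classical
  rw [bribedCount, card_eq_one]
  refine ⟨0, ext fun i => ?_⟩
  by_cases hi : i = 0
  · simp [bribeInst, hi, hbb']
  · simp [bribeInst, hi]

end Bribery

theorem leadRule_not_briberyProofOn {α : ℝ} (hα0 : 0 < α) (hα1 : α < 1) :
    ¬ BriberyProofOn (fun I => I.artists.card = 2) (leadRule α) := by
  intro hbribery
  set m := ⌈2 / α⌉₊
  have hm : 2 / α ≤ m := Nat.le_ceil _
  have hm2 : (2 : ℝ) < m := lt_of_lt_of_le ((lt_div_iff₀ hα0).mpr (by linarith)) hm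
  have hαm : 2 ≤ α * m := by rwa [div_le_iff₀' hα0] at hm
  -- `x` makes the uncapped lead payment vanish exactly before the bribe
  set x := (1 - α) * (m + 1) / ((2 - α) * m)
  have hden : 0 < (2 - α) * m := by nlinarith
  have hx0 : 0 ≤ x := div_nonneg (by nlinarith) hden.le
  have hx1 : x ≤ 1 := (div_le_one hden).mpr (by nlinarith)
  have hxm : (2 - α) * (m * x) = (1 - α) * (m + 1) := by
    rw [← mul_assoc, mul_div_cancel₀ _ hden.ne']
  have hcard : ∀ b hb, ((bribeInst m b x hb hx0).users.card : ℝ) = m + 1 := by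
    simp [bribeInst]
  have hbefore : leadPay α (bribeInst m 0 x le_rfl hx0) = 0 := by
    rw [leadPay, cappedEngagement_bribeInst, min_eq_left hx1, min_eq_left zero_le_one, hcard,
      show (2 - α) * (0 + m * x) - (1 - α) * (m + 1) = 0 by linear_combination hxm,
      min_eq_right (by positivity), max_self]
  have hafter : leadPay α (bribeInst m 1 x zero_le_one hx0) = 2 - α := by
    rw [leadPay, cappedEngagement_bribeInst, min_eq_left hx1, min_self, hcard,
      show (2 - α) * (1 + m * x) - (1 - α) * (m + 1) = 2 - α by linear_combination hxm,
      min_eq_right (by nlinarith), max_eq_right (by linarith)]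
  have key := hbribery (bribeInst m 0 x le_rfl hx0) (bribeInst m 1 x zero_le_one hx0)
    rfl rfl rfl rfl {0} (by simp [bribeInst])
  rw [sum_singleton, sum_singleton, bribedCount_bribeInst zero_ne_one] at key
  simp only [leadRule, leadArtist_bribeInst, if_true, hbefore, hafter] at key
  push_cast at key
  linarith

end

theorem stmt4 (α : ℝ) (hα : α ∈ Set.Ioo (0 : ℝ) 1) :
    ∃ φ : Inst → ℕ → ℝ,
      IsRuleOn (fun I => I.artists.card = 2) α φ ∧
      FraudProofOn (fun I => I.artists.card = 2) φ ∧
      ¬ BriberyProofOn (fun I => I.artists.card = 2) φ :=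
  ⟨leadRule α, leadRule_isRuleOn hα.1.le, leadRule_fraudProofOn hα.2.le,
    leadRule_not_briberyProofOn hα.1 hα.2⟩
end

section
/- The rule GlobalProp satisfies strong Sybil-proofness. -/
open Finset

theorem Finset.sum_sum_eq_sum_comm_add_sum_sdiff {ι κ M : Type*} [AddCommMonoid M]
    [DecidableEq κ] (u : Finset ι) {s t : Finset κ} (hst : s ⊆ t) (f : ι → κ → M) :
    ∑ i ∈ u, ∑ j ∈ t, f i j = ∑ j ∈ s, ∑ i ∈ u, f i j + ∑ i ∈ u, ∑ j ∈ t \ s, f i j := by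
  rw [Finset.sum_comm (s := s), ← Finset.sum_add_distrib]
  exact Finset.sum_congr rfl fun i _ => by rw [add_comm, Finset.sum_sdiff hst]

theorem globalProp_sum (α : ℝ) (I : Inst) (S : Finset ℕ) :
    ∑ j ∈ S, globalProp α I j = α * I.users.card * (∑ i ∈ I.users, ∑ j ∈ S, I.w i j) /
      ∑ i ∈ I.users, ∑ j ∈ I.artists, I.w i j := by
  simp only [globalProp, ← Finset.sum_div, ← Finset.mul_sum]
  rw [Finset.sum_comm]

theorem stmt5_general (α : ℝ) :
    StrongSybilProof (globalProp α) := by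
  intro I I' hU hsub Cstar hCs hstar htot
  have htotal : ∑ i ∈ I.users, ∑ j ∈ I.artists, I.w i j
      = ∑ i ∈ I'.users, ∑ j ∈ I'.artists, I'.w i j := by
    rw [Finset.sum_sum_eq_sum_comm_add_sum_sdiff _ hCs,
      Finset.sum_sum_eq_sum_comm_add_sum_sdiff _ (hCs.trans hsub), htot,
      Finset.sum_congr rfl hstar]
  rw [globalProp_sum, globalProp_sum, htot, htotal, hU]

theorem stmt5 (α : ℝ) (hα : α ∈ Set.Ioc (0 : ℝ) 1) :
    StrongSybilProof (globalProp α) :=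
  stmt5_general α
end

section
/- The rule GlobalProp is not fraud-proof and not bribery-proof: for every α ∈ (0,1] there exist a pair of instances violating the fraud-proofness condition and a pair of instances violating the bribery-proofness condition, each with only two artists. -/
open Finset

/-!
Take `n` users with `α n > 2` who all engage with artist `1` only. If one of them (a fake
account in the fraud case, a bribed user in the bribery case) instead puts weight `n` on
artist `0` alone, artist `0` goes from nothing to `α n · n / (2n - 1) > α n / 2 > 1`, although
only one user was added or changed.
-/

namespace Inst

def ofWeights (U A : Finset ℕ) (v : ℕ → ℕ → ℝ) (hU : U.Nonempty) (hv : ∀ i j, 0 ≤ v i j)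
    (hpos : ∀ i ∈ U, 0 < ∑ j ∈ A, v i j) : Inst where
  users := U
  artists := A
  w i j := if i ∈ U ∧ j ∈ A then v i j else 0
  users_nonempty := hU
  w_nonneg i j := by split_ifs <;> simp [hv]
  w_supp i j h := by_contra fun h' => h (if_neg h')
  w_pos i hi := by
    rw [sum_congr rfl fun j hj => if_pos ⟨hi, hj⟩]
    exact hpos i hi

variable {U A : Finset ℕ} {v : ℕ → ℕ → ℝ} {hU : U.Nonempty} {hv : ∀ i j, 0 ≤ v i j}
  {hpos : ∀ i ∈ U, 0 < ∑ j ∈ A, v i j}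

theorem ofWeights_w_of_mem {i j : ℕ} (hi : i ∈ U) (hj : j ∈ A) :
    (ofWeights U A v hU hv hpos).w i j = v i j :=
  if_pos ⟨hi, hj⟩

theorem globalProp_ofWeights (α : ℝ) {j : ℕ} (hj : j ∈ A) :
    globalProp α (ofWeights U A v hU hv hpos) j =
      α * U.card * (∑ i ∈ U, v i j) / ∑ i ∈ U, ∑ j' ∈ A, v i j' := by
  have hnum : ∑ i ∈ U, (ofWeights U A v hU hv hpos).w i j = ∑ i ∈ U, v i j :=
    sum_congr rfl fun i hi => ofWeights_w_of_mem hi hj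
  have hden : ∑ i ∈ U, ∑ j' ∈ A, (ofWeights U A v hU hv hpos).w i j' =
      ∑ i ∈ U, ∑ j' ∈ A, v i j' :=
    sum_congr rfl fun i hi => sum_congr rfl fun j' hj' => ofWeights_w_of_mem hi hj'
  exact congrArg₂ (α * U.card * · / ·) hnum hden

end Inst

def fanOfOne (_ j : ℕ) : ℝ := if j = 1 then 1 else 0

def fanOfOneExcept (u : ℕ) (m : ℝ) (i j : ℕ) : ℝ :=
  if i = u then (if j = 0 then m else 0) else fanOfOne i j

theorem fanOfOneExcept_of_ne {u i : ℕ} (m : ℝ) (h : i ≠ u) (j : ℕ) :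
    fanOfOneExcept u m i j = fanOfOne i j :=
  if_neg h

def fans (U : Finset ℕ) (hU : U.Nonempty) : Inst :=
  Inst.ofWeights U {0, 1} fanOfOne hU (fun _ j => by unfold fanOfOne; split_ifs <;> norm_num)
    (fun _ _ => by simp [fanOfOne])

def fansExcept (U : Finset ℕ) (u : ℕ) (m : ℝ) (hu : u ∈ U) (hm : 0 < m) : Inst :=
  Inst.ofWeights U {0, 1} (fanOfOneExcept u m) (show U.Nonempty from ⟨u, hu⟩)
    (fun i j => by unfold fanOfOneExcept fanOfOne; split_ifs <;> linarith)
    (fun i _ => by by_cases h : i = u <;> simp [fanOfOneExcept, fanOfOne, h, hm])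

theorem fans_w_eq_fansExcept_w {U V : Finset ℕ} {u : ℕ} {m : ℝ} (hV : V.Nonempty) (hu : u ∈ U)
    (hm : 0 < m) (hVU : V ⊆ U) {i : ℕ} (hi : i ∈ V) (hiu : i ≠ u) {j : ℕ}
    (hj : j ∈ ({0, 1} : Finset ℕ)) :
    (fans V hV).w i j = (fansExcept U u m hu hm).w i j := by
  rw [fans, fansExcept, Inst.ofWeights_w_of_mem hi hj, Inst.ofWeights_w_of_mem (hVU hi) hj,
    fanOfOneExcept_of_ne m hiu]

theorem globalProp_fans_zero (α : ℝ) (U : Finset ℕ) (hU : U.Nonempty) :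
    globalProp α (fans U hU) 0 = 0 := by
  rw [fans, Inst.globalProp_ofWeights α (by simp)]
  simp [fanOfOne]

theorem globalProp_fansExcept_zero (α : ℝ) {U : Finset ℕ} {u : ℕ} {m : ℝ} (hu : u ∈ U)
    (hm : 0 < m) :
    globalProp α (fansExcept U u m hu hm) 0 = α * U.card * m / (m + (U.card - 1)) := by
  rw [fansExcept, Inst.globalProp_ofWeights α (by simp)]
  simp only [fanOfOneExcept, fanOfOne]
  simp [sum_ite, filter_eq' U u, filter_ne' U u, hu, card_erase_of_mem,
    Nat.cast_pred (card_pos.mpr ⟨u, hu⟩)]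

theorem one_lt_globalProp_fansExcept {α : ℝ} {U : Finset ℕ} {u : ℕ} (hu : u ∈ U)
    (hm : (0 : ℝ) < U.card) (h : 2 < α * U.card) :
    1 < globalProp α (fansExcept U u U.card hu hm) 0 := by
  have hk : (1 : ℝ) ≤ U.card := by exact_mod_cast card_pos.mpr ⟨u, hu⟩
  rw [globalProp_fansExcept_zero α hu hm, lt_div_iff₀ (by linarith)]
  nlinarith

theorem bribedCount_le_one {I I' : Inst} (u : ℕ)
    (h : ∀ i ∈ I.users, i ≠ u → ∀ j ∈ I.artists, I.w i j = I'.w i j) :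
    bribedCount I I' ≤ 1 := by
  refine (card_le_card fun i hi => ?_).trans (card_singleton u).le
  obtain ⟨hi, j, hj, hne⟩ := mem_filter.mp hi
  by_contra hiu
  exact hne (h i hi (mt mem_singleton.mpr hiu) j hj)

theorem stmt6 (α : ℝ) (hα : α ∈ Set.Ioc (0 : ℝ) 1) :
    ¬ FraudProofOn (fun I => I.artists.card = 2) (globalProp α) ∧
    ¬ BriberyProofOn (fun I => I.artists.card = 2) (globalProp α) := by
  obtain ⟨hα0, hα1⟩ := hα
  obtain ⟨n, hn⟩ : ∃ n : ℕ, 2 < α * n := by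
    obtain ⟨n, hn⟩ := exists_nat_gt (2 / α)
    exact ⟨n, (div_lt_iff₀' hα0).mp hn⟩
  have hn2 : (2 : ℝ) < n := by nlinarith
  have h0 : 0 ∈ range n := mem_range.mpr (by exact_mod_cast (by linarith : (0 : ℝ) < n))
  have hgenuine : (range n \ {0}).Nonempty :=
    ⟨1, by simp; exact_mod_cast (by linarith : (1 : ℝ) < n)⟩
  have hcard : (0 : ℝ) < (range n).card := by rw [card_range]; linarith
  set cheat := fansExcept (range n) 0 _ h0 hcard
  have hgain : 1 < globalProp α cheat 0 :=
    one_lt_globalProp_fansExcept h0 hcard (by rwa [card_range])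
  constructor
  · intro hfraud
    have := hfraud (fans (range n \ {0}) hgenuine) cheat rfl rfl {0}
      (singleton_subset_iff.mpr h0) rfl rfl
      (fun i hi j hj => fans_w_eq_fansExcept_w _ h0 hcard sdiff_subset hi
        (by simpa using (mem_sdiff.mp hi).2) hj)
      {0} (singleton_subset_iff.mpr (mem_insert_self 0 {1}))
    rw [sum_singleton, sum_singleton, globalProp_fans_zero, card_singleton, Nat.cast_one] at this
    linarith
  · intro hbribe
    have hhonest : (range n).Nonempty := ⟨0, h0⟩
    have := hbribe (fans (range n) hhonest) cheat rfl rfl rfl rfl {0}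
      (singleton_subset_iff.mpr (mem_insert_self 0 {1}))
    have hk : (bribedCount (fans (range n) hhonest) cheat : ℝ) ≤ 1 := by
      exact_mod_cast bribedCount_le_one 0
        fun i hi hiu j hj => fans_w_eq_fansExcept_w hhonest h0 hcard subset_rfl hi hiu hj
    rw [sum_singleton, sum_singleton, globalProp_fans_zero] at this
    linarith
end

section
/- GlobalProp is the only neutral payment rule satisfying strong Sybil-proofness: if a payment rule φ is neutral and strongly Sybil-proof, then for every instance I = (N, C, w) and every artist j ∈ C, φ_I(j) = α·|N| · (∑_{i∈N} w_{ij}) / (∑_{i∈N} ∑_{j'∈C} w_{ij'}). -/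
open Finset

/-!
Strong Sybil-proofness with `C* = {k}`, together with the fixed budget `α·|N|`, shows that the
payment of an artist `k` depends only on the users, the total engagement `T` and the engagement
`s` of `k`; neutrality removes the dependence on the label `k`. This yields a function `f` on
`[0, T]` with `φ_I(k) = f(s)`, which is nonnegative and additive, since splitting an artist of
engagement `a + c` into two of engagements `a` and `c` keeps the payment of the rest fixed.
A nonnegative additive function on `[0, T]` is linear, and summing over the artists fixes the
slope: `f(T) = α·|N|`.
-/

section AdditiveOnInterval

variable {f : ℝ → ℝ} {T : ℝ}
  (hadd : ∀ a c, 0 ≤ a → 0 ≤ c → a + c ≤ T → f (a + c) = f a + f c)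
  (hnonneg : ∀ s, 0 ≤ s → s ≤ T → 0 ≤ f s)
include hadd

include hnonneg in
lemma map_le_map_of_add_of_nonneg {a b : ℝ} (ha : 0 ≤ a) (hab : a ≤ b) (hbT : b ≤ T) :
    f a ≤ f b := by
  have h := hadd a (b - a) ha (sub_nonneg.2 hab) (by linarith)
  rw [add_sub_cancel] at h
  linarith [hnonneg (b - a) (sub_nonneg.2 hab) (by linarith)]

lemma map_natCast_mul_of_add {x : ℝ} (hx : 0 ≤ x) :
    ∀ n : ℕ, n * x ≤ T → f (n * x) = n * f x
  | 0, hn => by simpa using hadd 0 0 le_rfl le_rfl (by simpa using hn)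
  | n + 1, hn => by
    have hnx : (n : ℝ) * x + x ≤ T := by push_cast at hn; linarith
    push_cast
    rw [add_one_mul, hadd _ _ (by positivity) hx hnx,
      map_natCast_mul_of_add hx n (by linarith)]
    ring

lemma map_ratCast_mul_of_add (hT : 0 < T) {q : ℚ} (hq₀ : 0 ≤ q) (hq₁ : q ≤ 1) :
    f (q * T) = q * f T := by
  obtain ⟨n, hn⟩ : ∃ n : ℕ, (n : ℤ) = q.num :=
    ⟨q.num.toNat, Int.toNat_of_nonneg (Rat.num_nonneg.2 hq₀)⟩
  have hd : (0 : ℝ) < q.den := by exact_mod_cast q.den_pos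
  have hq : (q : ℝ) = n / q.den := by rw [Rat.cast_def, ← hn]; rfl
  have hnd : (n : ℝ) ≤ q.den := by
    have : (q : ℝ) ≤ 1 := by exact_mod_cast hq₁
    rwa [hq, div_le_one hd] at this
  have hx : 0 ≤ T / q.den := by positivity
  have hfT : f T = q.den * f (T / q.den) := by
    rw [← map_natCast_mul_of_add hadd hx _ (by field_simp; rfl)]; field_simp
  rw [hfT, hq, show (n : ℝ) / q.den * T = n * (T / q.den) by ring,
    map_natCast_mul_of_add hadd hx n (by rw [← mul_div_assoc, div_le_iff₀ hd]; nlinarith)]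
  field_simp

include hnonneg in
theorem map_eq_div_mul_of_add_of_nonneg (hT : 0 < T) {s : ℝ} (hs : 0 ≤ s) (hsT : s ≤ T) :
    f s = s / T * f T := by
  have hmono {a b : ℝ} := map_le_map_of_add_of_nonneg hadd hnonneg (a := a) (b := b)
  have hfs : f s ≤ f T := hmono hs hsT le_rfl
  have hfs₀ : 0 ≤ f s := hnonneg s hs hsT
  rcases (hnonneg T hT.le le_rfl).eq_or_lt with hfT | hfT
  · rw [← hfT] at hfs ⊢
    linarith
  have hsT' : s / T ≤ 1 := (div_le_one hT).2 hsT
  rw [← div_eq_iff hfT.ne']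
  apply le_antisymm
  · refine le_of_forall_lt_rat_imp_le fun q hq => ?_
    rcases le_or_gt 1 (q : ℝ) with hq₁ | hq₁
    · exact ((div_le_one hfT).2 hfs).trans hq₁
    have hq₀ : (0 : ℝ) ≤ q := (div_nonneg hs hT.le).trans hq.le
    rw [div_le_iff₀ hfT, ← map_ratCast_mul_of_add hadd hT (by exact_mod_cast hq₀)
      (by exact_mod_cast hq₁.le)]
    exact hmono hs ((div_lt_iff₀ hT).1 hq).le (by nlinarith)
  · refine le_of_forall_rat_lt_imp_le fun q hq => ?_
    rcases le_or_gt (q : ℝ) 0 with hq₀ | hq₀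
    · exact hq₀.trans (div_nonneg hfs₀ hfT.le)
    rw [le_div_iff₀ hfT, ← map_ratCast_mul_of_add hadd hT (by exact_mod_cast hq₀.le)
      (by exact_mod_cast (hq.trans_le hsT').le)]
    exact hmono (by positivity) ((lt_div_iff₀ hT).1 hq).le hsT

end AdditiveOnInterval

namespace Inst

def engagement (I : Inst) (j : ℕ) : ℝ := ∑ i ∈ I.users, I.w i j

def totalEngagement (I : Inst) : ℝ := ∑ i ∈ I.users, ∑ j ∈ I.artists, I.w i j

variable (I : Inst)

lemma engagement_nonneg (j : ℕ) : 0 ≤ I.engagement j :=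
  sum_nonneg fun i _ => I.w_nonneg i j

lemma sum_engagement : ∑ j ∈ I.artists, I.engagement j = I.totalEngagement :=
  sum_comm

lemma totalEngagement_pos : 0 < I.totalEngagement :=
  sum_pos I.w_pos I.users_nonempty

lemma engagement_le_totalEngagement {j : ℕ} (hj : j ∈ I.artists) :
    I.engagement j ≤ I.totalEngagement :=
  I.sum_engagement ▸ single_le_sum (fun k _ => I.engagement_nonneg k) hj

lemma sum_sum_sdiff_singleton {k : ℕ} (hk : k ∈ I.artists) :
    ∑ i ∈ I.users, ∑ j ∈ I.artists \ {k}, I.w i j = I.totalEngagement - I.engagement k := by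
  rw [sum_comm, ← sum_engagement, sum_eq_sum_sdiff_singleton_add hk, add_sub_cancel_right]
  rfl

def addArtists (A : Finset ℕ) (hA : I.artists ⊆ A) : Inst where
  users := I.users
  artists := A
  w := I.w
  users_nonempty := I.users_nonempty
  w_nonneg := I.w_nonneg
  w_supp i j h := ⟨(I.w_supp i j h).1, hA (I.w_supp i j h).2⟩
  w_pos i hi := (I.w_pos i hi).trans_le <|
    sum_le_sum_of_subset_of_nonneg hA fun j _ _ => I.w_nonneg i j

lemma totalEngagement_addArtists (A : Finset ℕ) (hA : I.artists ⊆ A) :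
    (I.addArtists A hA).totalEngagement = I.totalEngagement :=
  sum_congr rfl fun i _ => (sum_subset hA fun j _ hj =>
    not_not.1 fun h => hj (I.w_supp i j h).2).symm

end Inst

noncomputable def uniformInst (N A : Finset ℕ) (t : ℕ → ℝ) (hN : N.Nonempty)
    (ht : ∀ j ∈ A, 0 ≤ t j) (hpos : 0 < ∑ j ∈ A, t j) : Inst where
  users := N
  artists := A
  w i j := if i ∈ N ∧ j ∈ A then t j / N.card else 0
  users_nonempty := hN
  w_nonneg i j := by
    split_ifs with h
    exacts [div_nonneg (ht j h.2) N.card.cast_nonneg, le_rfl]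
  w_supp i j h := by
    by_contra h'
    exact h (if_neg h')
  w_pos i hi := by
    rw [sum_congr rfl fun j hj => if_pos ⟨hi, hj⟩, ← sum_div]
    exact div_pos hpos (by exact_mod_cast hN.card_pos)

section uniformInst

variable {N A : Finset ℕ} {t : ℕ → ℝ} {hN : N.Nonempty} {ht : ∀ j ∈ A, 0 ≤ t j}
  {hpos : 0 < ∑ j ∈ A, t j}

lemma uniformInst_engagement {j : ℕ} (hj : j ∈ A) :
    (uniformInst N A t hN ht hpos).engagement j = t j := by
  have hcard : (N.card : ℝ) ≠ 0 := by exact_mod_cast hN.card_pos.ne'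
  simp only [Inst.engagement, uniformInst]
  rw [sum_congr rfl fun i hi => if_pos ⟨hi, hj⟩, sum_const, nsmul_eq_mul]
  field_simp

lemma uniformInst_totalEngagement :
    (uniformInst N A t hN ht hpos).totalEngagement = ∑ j ∈ A, t j := by
  rw [← Inst.sum_engagement]
  exact sum_congr rfl fun j hj => uniformInst_engagement hj

end uniformInst

noncomputable def pairInst (N : Finset ℕ) (hN : N.Nonempty) {k x : ℕ} (hkx : k ≠ x)
    (a b : ℝ) (ha : 0 ≤ a) (hb : 0 ≤ b) (hab : 0 < a + b) : Inst :=
  uniformInst N {k, x} (fun j => if j = k then a else b) hN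
    (fun j _ => by split_ifs; exacts [ha, hb])
    (by rwa [sum_pair hkx, if_pos rfl, if_neg hkx.symm])

section pairInst

variable {N : Finset ℕ} {hN : N.Nonempty} {k x : ℕ} {hkx : k ≠ x} {a b : ℝ} {ha : 0 ≤ a}
  {hb : 0 ≤ b} {hab : 0 < a + b}

lemma pairInst_engagement_left : (pairInst N hN hkx a b ha hb hab).engagement k = a := by
  rw [pairInst, uniformInst_engagement (mem_insert_self k {x}), if_pos rfl]

lemma pairInst_engagement_right : (pairInst N hN hkx a b ha hb hab).engagement x = b := by
  rw [pairInst, uniformInst_engagement (mem_insert_of_mem (mem_singleton_self x)),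
    if_neg hkx.symm]

lemma pairInst_totalEngagement :
    (pairInst N hN hkx a b ha hb hab).totalEngagement = a + b := by
  rw [pairInst, uniformInst_totalEngagement, sum_pair hkx, if_pos rfl, if_neg hkx.symm]

end pairInst

section PaymentRule

variable {α : ℝ} {φ : Inst → ℕ → ℝ}

lemma Neutral.apply_pairInst_swap (hneutral : Neutral φ) {N : Finset ℕ} {hN : N.Nonempty}
    {k x : ℕ} {hkx : k ≠ x} {a b : ℝ} {ha : 0 ≤ a} {hb : 0 ≤ b} {hab : 0 < a + b}
    {hba : 0 < b + a} :
    φ (pairInst N hN hkx a b ha hb hab) k = φ (pairInst N hN hkx b a hb ha hba) x := by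
  have h := hneutral (pairInst N hN hkx a b ha hb hab) (pairInst N hN hkx b a hb ha hba)
    trivial trivial rfl rfl (Equiv.swap k x) ?_ ?_ k (mem_insert_self k {x})
  · rwa [Equiv.swap_apply_left] at h
  · intro j hj
    simp only [pairInst, uniformInst, mem_insert, mem_singleton] at hj ⊢
    rcases hj with rfl | rfl <;> simp
  · intro i hi j hj
    simp only [pairInst, uniformInst, mem_insert, mem_singleton] at hj ⊢
    rcases hj with rfl | rfl <;> simp [hkx, hkx.symm]

namespace StrongSybilProof

variable (hssp : StrongSybilProof φ)
include hssp

lemma apply_eq_add_of_split (I J : Inst) (hN : I.users = J.users) {k x y : ℕ} (hkx : k ≠ x)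
    (hky : k ≠ y) (hxy : x ≠ y) (hI : I.artists = {k, x}) (hJ : J.artists = {k, x, y})
    (hx : I.engagement x = J.engagement x) (htot : I.totalEngagement = J.totalEngagement) :
    φ I k = φ J k + φ J y := by
  have hxI : x ∈ I.artists := by simp [hI]
  have h := hssp I J hN (by rw [hI, hJ]; exact insert_subset_insert _ (by simp)) {x}
    (singleton_subset_iff.2 hxI) (fun j hj => mem_singleton.1 hj ▸ hx)
    (by rw [I.sum_sum_sdiff_singleton hxI, J.sum_sum_sdiff_singleton (by simp [hJ]), hx, htot])
  rwa [hI, hJ, show ({k, x} : Finset ℕ) \ {x} = {k} by ext; simp; grind,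
    show ({k, x, y} : Finset ℕ) \ {x} = {k, y} by ext; simp; grind, sum_singleton,
    sum_pair hky] at h

variable (hφ : IsRule α φ)
include hφ

lemma apply_eq_of_subset (I I' : Inst) (hN : I.users = I'.users)
    (hC : I.artists ⊆ I'.artists) {k : ℕ} (hk : k ∈ I.artists)
    (heng : I.engagement k = I'.engagement k)
    (htot : I.totalEngagement = I'.totalEngagement) :
    φ I k = φ I' k := by
  have hrest := hssp I I' hN hC {k} (singleton_subset_iff.2 hk)
    (fun j hj => mem_singleton.1 hj ▸ heng)
    (by rw [I.sum_sum_sdiff_singleton hk, I'.sum_sum_sdiff_singleton (hC hk), heng, htot])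
  have hI := (hφ I trivial).2
  have hI' := (hφ I' trivial).2
  rw [sum_eq_sum_sdiff_singleton_add hk] at hI
  rw [sum_eq_sum_sdiff_singleton_add (hC hk), ← hN] at hI'
  linarith

lemma apply_eq_of_engagement_eq (I J : Inst) (hN : I.users = J.users)
    (htot : I.totalEngagement = J.totalEngagement) {k : ℕ} (hkI : k ∈ I.artists)
    (hkJ : k ∈ J.artists) (heng : I.engagement k = J.engagement k) :
    φ I k = φ J k := by
  let M := I.addArtists (I.artists ∪ J.artists) subset_union_left
  have hM : M.totalEngagement = I.totalEngagement := I.totalEngagement_addArtists _ _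
  calc φ I k = φ M k := hssp.apply_eq_of_subset hφ I M rfl subset_union_left hkI rfl hM.symm
    _ = φ J k := (hssp.apply_eq_of_subset hφ J M hN.symm subset_union_right hkJ heng.symm
      (htot.symm.trans hM.symm)).symm

lemma apply_eq_of_engagement_eq_of_neutral (hneutral : Neutral φ) (I J : Inst)
    (hN : I.users = J.users) (htot : I.totalEngagement = J.totalEngagement) {k k' : ℕ}
    (hk : k ∈ I.artists) (hk' : k' ∈ J.artists) (heng : I.engagement k = J.engagement k') :
    φ I k = φ J k' := by
  rcases eq_or_ne k k' with rfl | hkk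
  · exact hssp.apply_eq_of_engagement_eq hφ I J hN htot hk hk' heng
  set s := I.engagement k
  set T := I.totalEngagement
  have hs : 0 ≤ s := I.engagement_nonneg k
  have hsT : 0 ≤ T - s := sub_nonneg.2 (I.engagement_le_totalEngagement hk)
  have hT : 0 < T := I.totalEngagement_pos
  let P := pairInst I.users I.users_nonempty hkk s (T - s) hs hsT (by linarith)
  let Q := pairInst I.users I.users_nonempty hkk (T - s) s hsT hs (by linarith)
  calc φ I k = φ P k :=
        hssp.apply_eq_of_engagement_eq hφ I P rfl (by rw [pairInst_totalEngagement]; ring)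
          hk (mem_insert_self k {k'}) pairInst_engagement_left.symm
    _ = φ Q k' := hneutral.apply_pairInst_swap
    _ = φ J k' :=
        hssp.apply_eq_of_engagement_eq hφ Q J hN
          (by rw [pairInst_totalEngagement, ← htot]; ring)
          (mem_insert_of_mem (mem_singleton_self k')) hk' (pairInst_engagement_right.trans heng)

end StrongSybilProof

/-- Read off the two-artist instance with engagements `s` and `T - s`; by
`StrongSybilProof.apply_eq_paymentAt` it is the payment of any artist with engagement `s` in any
instance with the users and the total engagement `T` of `I`. Junk value `0` outside `[0, T]`. -/
noncomputable def Inst.paymentAt (φ : Inst → ℕ → ℝ) (I : Inst) (s : ℝ) : ℝ :=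
  if h : 0 ≤ s ∧ s ≤ I.totalEngagement then
    φ (pairInst I.users I.users_nonempty zero_ne_one s (I.totalEngagement - s) h.1
      (sub_nonneg.2 h.2) (by rw [add_sub_cancel]; exact I.totalEngagement_pos)) 0
  else 0

lemma Inst.paymentAt_nonneg (hφ : IsRule α φ) (I : Inst) (s : ℝ) : 0 ≤ I.paymentAt φ s := by
  unfold Inst.paymentAt
  split_ifs
  exacts [(hφ _ trivial).1 0 (mem_insert_self 0 {1}), le_rfl]

namespace StrongSybilProof

variable (hssp : StrongSybilProof φ) (hφ : IsRule α φ) (hneutral : Neutral φ)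
include hssp hφ hneutral

lemma apply_eq_paymentAt (I J : Inst) (hN : J.users = I.users)
    (htot : J.totalEngagement = I.totalEngagement) {k : ℕ} (hk : k ∈ J.artists) :
    φ J k = I.paymentAt φ (J.engagement k) := by
  rw [Inst.paymentAt,
    dif_pos ⟨J.engagement_nonneg k, htot ▸ J.engagement_le_totalEngagement hk⟩]
  apply hssp.apply_eq_of_engagement_eq_of_neutral hφ hneutral
  exacts [hN, by rw [pairInst_totalEngagement, htot]; ring, hk, mem_insert_self 0 {1},
    pairInst_engagement_left.symm]

lemma paymentAt_add (I : Inst) (a c : ℝ) (ha : 0 ≤ a) (hc : 0 ≤ c)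
    (hac : a + c ≤ I.totalEngagement) :
    I.paymentAt φ (a + c) = I.paymentAt φ a + I.paymentAt φ c := by
  set T := I.totalEngagement
  let t : ℕ → ℝ := fun j => if j = 0 then a else if j = 1 then T - (a + c) else c
  have hsum : ∑ j ∈ {0, 1, 2}, t j = T := by
    rw [sum_insert (by decide), sum_pair (by decide)]
    show a + (T - (a + c) + c) = T
    ring
  let U₃ := uniformInst I.users {0, 1, 2} t I.users_nonempty
    (fun j _ => by simp only [t]; split_ifs <;> linarith) (hsum ▸ I.totalEngagement_pos)
  let U₂ := pairInst I.users I.users_nonempty zero_ne_one (a + c) (T - (a + c)) (by positivity)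
    (sub_nonneg.2 hac) (by linarith [I.totalEngagement_pos])
  have hU₃ : U₃.totalEngagement = T := uniformInst_totalEngagement.trans hsum
  have hU₂ : U₂.totalEngagement = T := by rw [pairInst_totalEngagement]; ring
  have e₀ : U₃.engagement 0 = a := uniformInst_engagement (by decide)
  have e₁ : U₃.engagement 1 = T - (a + c) := uniformInst_engagement (by decide)
  have e₂ : U₃.engagement 2 = c := uniformInst_engagement (by decide)
  have hpay (J : Inst) (hN : J.users = I.users) (htot : J.totalEngagement = T) {k : ℕ}
      (hk : k ∈ J.artists) := hssp.apply_eq_paymentAt hφ hneutral I J hN htot hk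
  calc I.paymentAt φ (a + c) = φ U₂ 0 := by
        rw [hpay U₂ rfl hU₂ (mem_insert_self 0 {1}), pairInst_engagement_left]
    _ = φ U₃ 0 + φ U₃ 2 :=
        hssp.apply_eq_add_of_split U₂ U₃ rfl (by decide) (by decide) (by decide) rfl rfl
          (pairInst_engagement_right.trans e₁.symm)
          (hU₂.trans hU₃.symm)
    _ = I.paymentAt φ a + I.paymentAt φ c := by
        rw [hpay U₃ rfl hU₃ (show 0 ∈ ({0, 1, 2} : Finset ℕ) by decide),
          hpay U₃ rfl hU₃ (show 2 ∈ ({0, 1, 2} : Finset ℕ) by decide), e₀, e₂]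

end StrongSybilProof

end PaymentRule

theorem stmt7_general (α : ℝ)
    (φ : Inst → ℕ → ℝ) (hφ : IsRule α φ)
    (hneutral : Neutral φ) (hssp : StrongSybilProof φ) :
    ∀ I : Inst, ∀ j ∈ I.artists,
      φ I j = α * I.users.card * (∑ i ∈ I.users, I.w i j) /
        (∑ i ∈ I.users, ∑ j' ∈ I.artists, I.w i j') := by
  intro I j hj
  have hT : 0 < I.totalEngagement := I.totalEngagement_pos
  have hpay (k : ℕ) (hk : k ∈ I.artists) :
      φ I k = I.engagement k / I.totalEngagement * I.paymentAt φ I.totalEngagement := by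
    rw [hssp.apply_eq_paymentAt hφ hneutral I I rfl rfl hk]
    exact map_eq_div_mul_of_add_of_nonneg (hssp.paymentAt_add hφ hneutral I)
      (fun s _ _ => I.paymentAt_nonneg hφ s) hT (I.engagement_nonneg k)
      (I.engagement_le_totalEngagement hk)
  have hslope : I.paymentAt φ I.totalEngagement = α * I.users.card := by
    rw [← (hφ I trivial).2, sum_congr rfl hpay, ← sum_mul, ← sum_div, I.sum_engagement,
      div_self hT.ne', one_mul]
  rw [hpay j hj, hslope, Inst.engagement, Inst.totalEngagement]
  ring

theorem stmt7 (α : ℝ) (hα : α ∈ Set.Ioc (0 : ℝ) 1)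
    (φ : Inst → ℕ → ℝ) (hφ : IsRule α φ)
    (hneutral : Neutral φ) (hssp : StrongSybilProof φ) :
    ∀ I : Inst, ∀ j ∈ I.artists,
      φ I j = α * I.users.card * (∑ i ∈ I.users, I.w i j) /
        (∑ i ∈ I.users, ∑ j' ∈ I.artists, I.w i j') :=
  stmt7_general α φ hφ hneutral hssp
end

section
/- Every user-additive payment rule is fraud-proof and bribery-proof. -/
open Finset

/-! By user-additivity the payment to a coalition `Ĉ` is the sum over users of the payment
`Ĉ` receives in that user's single-user instance, which lies in `[0, α] ⊆ [0, 1]`. Users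
whose engagement vector is the same in `I` and `I'` contribute equally to both sides, so
the gain `φ_{I'}(Ĉ) − φ_I(Ĉ)` is at most the number of fake or bribed users. -/

lemma Inst.single_congr {I I' : Inst} {i : ℕ} (hi : i ∈ I.users) (hi' : i ∈ I'.users)
    (hart : I.artists = I'.artists) (hw : ∀ j ∈ I.artists, I.w i j = I'.w i j) :
    I.single i hi = I'.single i hi' := by
  have hw' : ∀ j, I.w i j = I'.w i j := by
    intro j
    by_cases hj : j ∈ I.artists
    · exact hw j hj
    · have h : I.w i j = 0 := by_contra fun hc => hj (I.w_supp i j hc).2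
      have h' : I'.w i j = 0 := by_contra fun hc => hj (hart ▸ (I'.w_supp i j hc).2)
      rw [h, h']
  unfold Inst.single
  congr 1
  exact funext fun _ => funext fun j => by simp only [hw' j]

open Classical in
/-- Set to `0` for `i ∉ I.users`, so that sums over nested user sets can be compared. -/
noncomputable def userPayment (φ : Inst → ℕ → ℝ) (S : Finset ℕ) (I : Inst) (i : ℕ) : ℝ :=
  if h : i ∈ I.users then ∑ j ∈ S, φ (I.single i h) j else 0

section UserPayment

variable {φ : Inst → ℕ → ℝ} {S : Finset ℕ} {I I' : Inst}

lemma sum_eq_sum_userPayment (hadd : UserAdditive φ) (hS : S ⊆ I.artists) :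
    ∑ j ∈ S, φ I j = ∑ i ∈ I.users, userPayment φ S I i := by
  rw [Finset.sum_congr rfl fun j hj => hadd I j (hS hj), Finset.sum_comm,
    ← Finset.sum_attach I.users]
  exact Finset.sum_congr rfl fun i _ => by simp only [userPayment, dif_pos i.2]

lemma userPayment_nonneg {α : ℝ} (hφ : IsRule α φ) (hS : S ⊆ I.artists) (i : ℕ) :
    0 ≤ userPayment φ S I i := by
  unfold userPayment
  split
  · exact Finset.sum_nonneg fun j hj => (hφ _ trivial).1 j (hS hj)
  · exact le_rfl

lemma userPayment_le_one {α : ℝ} (hφ : IsRule α φ) (hα : α ≤ 1) (hS : S ⊆ I.artists)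
    (i : ℕ) : userPayment φ S I i ≤ 1 := by
  unfold userPayment
  split
  · rename_i hi
    obtain ⟨hnonneg, htotal⟩ := hφ (I.single i hi) trivial
    calc ∑ j ∈ S, φ (I.single i hi) j
        ≤ ∑ j ∈ (I.single i hi).artists, φ (I.single i hi) j :=
          Finset.sum_le_sum_of_subset_of_nonneg hS fun j hj _ => hnonneg j hj
      _ = α := by rw [htotal]; simp [Inst.single]
      _ ≤ 1 := hα
  · exact zero_le_one

lemma userPayment_congr {i : ℕ} (hi : i ∈ I.users) (hi' : i ∈ I'.users)
    (hart : I.artists = I'.artists) (hw : ∀ j ∈ I.artists, I.w i j = I'.w i j) :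
    userPayment φ S I i = userPayment φ S I' i := by
  simp only [userPayment, dif_pos hi, dif_pos hi', Inst.single_congr hi hi' hart hw]

theorem sum_sub_sum_le_card {α : ℝ} (hφ : IsRule α φ) (hα : α ≤ 1) (hadd : UserAdditive φ)
    (hart : I.artists = I'.artists) (husers : I.users ⊆ I'.users)
    {D : Finset ℕ} (hD : D ⊆ I'.users)
    (hagree : ∀ i ∈ I'.users \ D, i ∈ I.users ∧ ∀ j ∈ I.artists, I.w i j = I'.w i j)
    (hS : S ⊆ I.artists) :
    ∑ j ∈ S, φ I' j - ∑ j ∈ S, φ I j ≤ D.card := by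
  have hS' : S ⊆ I'.artists := hart ▸ hS
  have hextend : ∑ i ∈ I.users, userPayment φ S I i = ∑ i ∈ I'.users, userPayment φ S I i :=
    Finset.sum_subset husers fun i _ hi => by simp only [userPayment, dif_neg hi]
  have hcancel : ∀ i ∈ I'.users \ D, userPayment φ S I' i - userPayment φ S I i = 0 :=
    fun i hi => by
      obtain ⟨hiI, hw⟩ := hagree i hi
      rw [userPayment_congr hiI (Finset.mem_sdiff.mp hi).1 hart hw, sub_self]
  calc ∑ j ∈ S, φ I' j - ∑ j ∈ S, φ I j
      = ∑ i ∈ I'.users, (userPayment φ S I' i - userPayment φ S I i) := by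
        rw [sum_eq_sum_userPayment hadd hS, sum_eq_sum_userPayment hadd hS', hextend,
          Finset.sum_sub_distrib]
    _ = ∑ i ∈ D, (userPayment φ S I' i - userPayment φ S I i) := by
        rw [← Finset.sum_sdiff hD, Finset.sum_eq_zero hcancel, zero_add]
    _ ≤ ∑ _i ∈ D, (1 : ℝ) := Finset.sum_le_sum fun i _ => by
        linarith [userPayment_le_one hφ hα hS' i, userPayment_nonneg hφ hS i]
    _ = D.card := by simp

end UserPayment

theorem stmt11 (α : ℝ) (hα : α ∈ Set.Ioc (0 : ℝ) 1)
    (φ : Inst → ℕ → ℝ) (hφ : IsRule α φ)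
    (hadd : UserAdditive φ) :
    FraudProof φ ∧ BriberyProof φ := by
  constructor
  · intro I I' _ _ Nhat hNhat husers hart hw Chat hChat
    refine sum_sub_sum_le_card hφ hα.2 hadd hart (husers ▸ Finset.sdiff_subset) hNhat
      (fun i hi => ?_) hChat
    exact ⟨husers ▸ hi, hw i (husers ▸ hi)⟩
  · intro I I' _ _ husers hart Chat hChat
    classical
    refine sum_sub_sum_le_card hφ hα.2 hadd hart husers.subset
      (husers ▸ Finset.filter_subset _ _) (fun i hi => ?_) hChat
    obtain ⟨hi', hbribed⟩ := Finset.mem_sdiff.mp hi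
    have hiI : i ∈ I.users := husers ▸ hi'
    refine ⟨hiI, fun j hj => ?_⟩
    by_contra hne
    exact hbribed (Finset.mem_filter.mpr ⟨hiI, j, hj, hne⟩)
end

section
/- The rule UserProp is Sybil-proof. -/
open Finset

/-! Under UserProp a set `D` of artists receives `α · ∑ᵢ wᵢ(D) / wᵢ(C)`. A Sybil manipulation
outside `C*` preserves every user's engagement with `C \ C*` and with `C*`, hence both the
numerator for `D = C \ C*` and each user's total engagement `wᵢ(C)`. -/

lemma Finset.sum_eq_sum_of_sum_sdiff_eq {ι M : Type*} [DecidableEq ι] [AddCommMonoid M]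
    {A A' S : Finset ι} {f g : ι → M} (hA : S ⊆ A) (hA' : S ⊆ A')
    (hS : ∀ j ∈ S, f j = g j) (hsdiff : ∑ j ∈ A \ S, f j = ∑ j ∈ A' \ S, g j) :
    ∑ j ∈ A, f j = ∑ j ∈ A', g j := by
  rw [← sum_sdiff hA, ← sum_sdiff hA', hsdiff, sum_congr rfl hS]

lemma userProp_sum (α : ℝ) (I : Inst) (D : Finset ℕ) :
    ∑ j ∈ D, userProp α I j
      = α * ∑ i ∈ I.users, (∑ j ∈ D, I.w i j) / ∑ j ∈ I.artists, I.w i j := by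
  simp only [userProp, ← mul_sum, sum_div]
  rw [sum_comm]

theorem stmt12_general (α : ℝ) :
    SybilProof (userProp α) := by
  intro I I' hu ha Cstar hC hstar hrest
  have htotal : ∀ i ∈ I.users, ∑ j ∈ I.artists, I.w i j = ∑ j ∈ I'.artists, I'.w i j :=
    fun i hi => sum_eq_sum_of_sum_sdiff_eq hC (hC.trans ha) (hstar i hi) (hrest i hi)
  rw [userProp_sum, userProp_sum, ← hu]
  congr 1
  exact sum_congr rfl fun i hi => by rw [hrest i hi, htotal i hi]

theorem stmt12 (α : ℝ) (hα : α ∈ Set.Ioc (0 : ℝ) 1) :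
    SybilProof (userProp α) :=
  stmt12_general α
end
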